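/- Let G and H be finite multiplicative Lie algebras and α : G → H a multiplicative Lie algebra homomorphism. Then α induces an isoclinism between G and H (i.e. there exists an isoclinism (λ, μ) with λ(g𝒵(G)) = α(g)𝒵(H) for all g ∈ G and μ(x) = α(x) for all x ∈ ^M[G,G]) if and only if ker(α) ∩ ^M[G,G] = {1} and H = Image(α)·𝒵(H). -/

import Mathlib

universe u v

/-- A multiplicative Lie algebra: a group with an extra binary operation `⋆`
satisfying the Ellis axioms. -/
class MultLieAlgebra (G : Type u) extends Group G where
  lstar : G → G → G
  lstar_self : ∀ g : G, lstar g g = 1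
  lstar_mul_right : ∀ g h h' : G, lstar g (h * h') = lstar g h * (h * lstar g h' * h⁻¹)
  lstar_mul_left : ∀ g g' h : G, lstar (g * g') h = (g * lstar g' h * g⁻¹) * lstar g h
  lstar_jacobi : ∀ g h k : G,
      lstar (lstar g h) (h * k * h⁻¹) * lstar (lstar h k) (k * g * k⁻¹) *
        lstar (lstar k g) (g * h * g⁻¹) = 1
  conj_lstar : ∀ k g h : G, k * lstar g h * k⁻¹ = lstar (k * g * k⁻¹) (k * h * k⁻¹)

namespace MultLieAlgebra

open scoped commutatorElement

infixl:72 " ⋆ " => MultLieAlgebra.lstar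

variable {G : Type u} [MultLieAlgebra G]

lemma one_lstar (x : G) : (1 : G) ⋆ x = 1 := by
  have h := lstar_mul_left (1 : G) 1 x
  simp only [one_mul, inv_one, mul_one] at h
  exact (right_eq_mul.mp h)

lemma lstar_one (x : G) : x ⋆ (1 : G) = 1 := by
  have h := lstar_mul_right x (1 : G) 1
  simp only [one_mul, inv_one, mul_one] at h
  exact left_eq_mul.mp h

lemma inv_lstar_of_lstar_eq_one {g : G} (hg : ∀ x : G, g ⋆ x = 1) (y : G) : g⁻¹ ⋆ y = 1 := by
  have h := lstar_mul_left g⁻¹ g y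
  simp only [inv_mul_cancel, one_lstar, hg, mul_one, inv_inv] at h
  simpa using h.symm

lemma lstar_inv_of_lstar_eq_one {g : G} (hg : ∀ x : G, x ⋆ g = 1) (y : G) : y ⋆ g⁻¹ = 1 := by
  have h := lstar_mul_right y g⁻¹ g
  simp only [inv_mul_cancel, lstar_one, hg, mul_one, inv_inv] at h
  simpa using h.symm

/-- The multiplicative commutator ideal `ᴹ[G,G]`, generated by all commutators
`⁅a,b⁆` and all values `a ⋆ b`. -/
def mlCommutator (G : Type u) [MultLieAlgebra G] : Subgroup G :=
  Subgroup.closure {x : G | (∃ a b : G, x = ⁅a, b⁆) ∨ ∃ a b : G, x = a ⋆ b}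

lemma commutator_mem_mlCommutator (a b : G) : ⁅a, b⁆ ∈ mlCommutator G :=
  Subgroup.subset_closure (Or.inl ⟨a, b, rfl⟩)

lemma lstar_mem_mlCommutator (a b : G) : a ⋆ b ∈ mlCommutator G :=
  Subgroup.subset_closure (Or.inr ⟨a, b, rfl⟩)

instance mlCommutator_normal : (mlCommutator G).Normal := by
  constructor
  intro n hn g
  induction hn using Subgroup.closure_induction with
  | mem x hx =>
    rcases hx with ⟨a, b, rfl⟩ | ⟨a, b, rfl⟩
    · have : g * ⁅a, b⁆ * g⁻¹ = ⁅g * a * g⁻¹, g * b * g⁻¹⁆ := by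
        simp only [commutatorElement_def]; group
      rw [this]; exact commutator_mem_mlCommutator _ _
    · rw [conj_lstar]; exact lstar_mem_mlCommutator _ _
  | one => simpa using one_mem (mlCommutator G)
  | mul x y hx hy ihx ihy =>
    have : g * (x * y) * g⁻¹ = (g * x * g⁻¹) * (g * y * g⁻¹) := by group
    rw [this]; exact mul_mem ihx ihy
  | inv x hx ihx =>
    have : g * x⁻¹ * g⁻¹ = (g * x * g⁻¹)⁻¹ := by group
    rw [this]; exact inv_mem ihx

/-- The multiplicative Lie center `𝒵(G) = Z(G) ∩ LZ(G)`. -/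
def mlCenter (G : Type u) [MultLieAlgebra G] : Subgroup G where
  carrier := {g : G | (∀ x : G, g * x = x * g) ∧ ∀ x : G, g ⋆ x = 1 ∧ x ⋆ g = 1}
  one_mem' := ⟨fun x => by simp, fun x => ⟨one_lstar x, lstar_one x⟩⟩
  mul_mem' := by
    rintro a b ⟨ha₁, ha₂⟩ ⟨hb₁, hb₂⟩
    refine ⟨fun x => by rw [mul_assoc, hb₁ x, ← mul_assoc, ha₁ x, mul_assoc], fun x => ?_⟩
    constructor
    · rw [lstar_mul_left, (hb₂ x).1, (ha₂ x).1]; simp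
    · rw [lstar_mul_right, (ha₂ x).2, (hb₂ x).2]; simp
  inv_mem' := by
    rintro a ⟨ha₁, ha₂⟩
    refine ⟨fun x => by rw [inv_mul_eq_iff_eq_mul, ← mul_assoc, ha₁ x, mul_assoc,
      mul_inv_cancel, mul_one], fun x => ?_⟩
    exact ⟨inv_lstar_of_lstar_eq_one (fun y => (ha₂ y).1) x,
      lstar_inv_of_lstar_eq_one (fun y => (ha₂ y).2) x⟩

lemma mem_mlCenter_iff {g : G} :
    g ∈ mlCenter G ↔ (∀ x : G, g * x = x * g) ∧ ∀ x : G, g ⋆ x = 1 ∧ x ⋆ g = 1 :=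
  Iff.rfl

instance mlCenter_normal : (mlCenter G).Normal := by
  constructor
  intro n hn g
  have h : g * n * g⁻¹ = n := by rw [← hn.1 g]; group
  rw [h]; exact hn

/-- An isoclinism between two multiplicative Lie algebras. -/
structure Isoclinism (G : Type u) (H : Type v) [MultLieAlgebra G] [MultLieAlgebra H] where
  lam : (G ⧸ mlCenter G) ≃* (H ⧸ mlCenter H)
  mu : mlCommutator G ≃* mlCommutator H
  map_commutator : ∀ (g g' : G) (h h' : H),
    lam (QuotientGroup.mk g) = QuotientGroup.mk h →
    lam (QuotientGroup.mk g') = QuotientGroup.mk h' →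
    (mu ⟨⁅g, g'⁆, commutator_mem_mlCommutator g g'⟩ : H) = ⁅h, h'⁆
  map_lstar : ∀ (g g' : G) (h h' : H),
    lam (QuotientGroup.mk g) = QuotientGroup.mk h →
    lam (QuotientGroup.mk g') = QuotientGroup.mk h' →
    (mu ⟨g ⋆ g', lstar_mem_mlCommutator g g'⟩ : H) = h ⋆ h'

/-- Two multiplicative Lie algebras are isoclinic if there is an isoclinism between them. -/
def Isoclinic (G : Type u) (H : Type v) [MultLieAlgebra G] [MultLieAlgebra H] : Prop :=
  Nonempty (Isoclinism G H)

/-- Componentwise multiplicative Lie algebra structure on a binary product. -/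
instance instProd (G : Type u) (H : Type v) [MultLieAlgebra G] [MultLieAlgebra H] :
    MultLieAlgebra (G × H) where
  lstar a b := (a.1 ⋆ b.1, a.2 ⋆ b.2)
  lstar_self a := by ext <;> simp [lstar_self]
  lstar_mul_right a b c := by ext <;> simp [lstar_mul_right]
  lstar_mul_left a b c := by ext <;> simp [lstar_mul_left]
  lstar_jacobi a b c := by ext <;> simp [lstar_jacobi]
  conj_lstar k a b := by ext <;> simp [← conj_lstar]

/-- Componentwise multiplicative Lie algebra structure on a Pi type. -/
instance instPi {ι : Type v} (f : ι → Type u) [∀ i, MultLieAlgebra (f i)] :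
    MultLieAlgebra (∀ i, f i) where
  lstar a b := fun i => a i ⋆ b i
  lstar_self a := by funext i; simp [lstar_self]
  lstar_mul_right a b c := by funext i; simp [lstar_mul_right]
  lstar_mul_left a b c := by funext i; simp [lstar_mul_left]
  lstar_jacobi a b c := by funext i; simp [lstar_jacobi]
  conj_lstar k a b := by funext i; simp [← conj_lstar]

/-- The trivial multiplicative Lie algebra structure on the one-element group. -/
instance instPUnit : MultLieAlgebra PUnit.{u+1} where
  lstar _ _ := 1
  lstar_self _ := rfl
  lstar_mul_right _ _ _ := rfl
  lstar_mul_left _ _ _ := rfl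
  lstar_jacobi _ _ _ := rfl
  conj_lstar _ _ _ := rfl

/-- A subalgebra of a multiplicative Lie algebra: a subgroup closed under `⋆`. -/
structure MLSubalgebra (G : Type u) [MultLieAlgebra G] extends Subgroup G where
  lstar_mem' : ∀ {a b : G}, a ∈ carrier → b ∈ carrier → a ⋆ b ∈ carrier

/-- A subalgebra is a multiplicative Lie algebra with the restricted operations. -/
instance instSubalgebra (H : MLSubalgebra G) : MultLieAlgebra H.toSubgroup where
  lstar a b := ⟨(a : G) ⋆ (b : G), H.lstar_mem' a.2 b.2⟩
  lstar_self a := Subtype.ext (lstar_self (a : G))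
  lstar_mul_right a b c := Subtype.ext (lstar_mul_right (a : G) b c)
  lstar_mul_left a b c := Subtype.ext (lstar_mul_left (a : G) b c)
  lstar_jacobi a b c := Subtype.ext (lstar_jacobi (a : G) b c)
  conj_lstar k a b := Subtype.ext (conj_lstar (k : G) a b)

lemma mul_center_lstar {z : G} (hz : z ∈ mlCenter G) (g y : G) : (g * z) ⋆ y = g ⋆ y := by
  rw [lstar_mul_left, (hz.2 y).1]
  simp

lemma lstar_mul_center {z : G} (hz : z ∈ mlCenter G) (g y : G) : y ⋆ (g * z) = y ⋆ g := by
  rw [lstar_mul_right, (hz.2 y).2]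
  simp

/-- The subalgebra `H·𝒵(G)` generated by a subalgebra `H` and the multiplicative
Lie center of `G`. -/
def MLSubalgebra.centerJoin (H : MLSubalgebra G) : MLSubalgebra G where
  carrier := {x : G | ∃ h ∈ H.carrier, ∃ z ∈ mlCenter G, x = h * z}
  one_mem' := ⟨1, H.toSubgroup.one_mem, 1, one_mem _, by simp⟩
  mul_mem' := by
    rintro x y ⟨h, hh, z, hz, rfl⟩ ⟨h', hh', z', hz', rfl⟩
    refine ⟨h * h', H.toSubgroup.mul_mem hh hh', z * z', mul_mem hz hz', ?_⟩
    rw [mul_assoc, ← mul_assoc z h' z', hz.1 h', mul_assoc, ← mul_assoc, ← mul_assoc]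
  inv_mem' := by
    rintro x ⟨h, hh, z, hz, rfl⟩
    refine ⟨h⁻¹, H.toSubgroup.inv_mem hh, z⁻¹, inv_mem hz, ?_⟩
    rw [mul_inv_rev, (inv_mem hz).1 h⁻¹]
  lstar_mem' := by
    rintro x y ⟨h, hh, z, hz, rfl⟩ ⟨h', hh', z', hz', rfl⟩
    exact ⟨h ⋆ h', H.lstar_mem' hh hh', 1, one_mem _, by
      rw [mul_center_lstar hz, lstar_mul_center hz', mul_one]⟩

/-- An ideal of a multiplicative Lie algebra: a normal subgroup `I` with
`g ⋆ i ∈ I` and `i ⋆ g ∈ I` for all `g ∈ G`, `i ∈ I`. -/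
structure MLIdeal (G : Type u) [MultLieAlgebra G] extends Subgroup G where
  conj_mem' : ∀ n : G, n ∈ carrier → ∀ g : G, g * n * g⁻¹ ∈ carrier
  lstar_mem_left' : ∀ (g : G) {i : G}, i ∈ carrier → g ⋆ i ∈ carrier
  lstar_mem_right' : ∀ (g : G) {i : G}, i ∈ carrier → i ⋆ g ∈ carrier

instance MLIdeal.normal (I : MLIdeal G) : I.toSubgroup.Normal := ⟨I.conj_mem'⟩

/-- An ideal is in particular a subalgebra. -/
def MLIdeal.toMLSubalgebra (I : MLIdeal G) : MLSubalgebra G :=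
  { I.toSubgroup with lstar_mem' := fun {a _} _ hb => I.lstar_mem_left' a hb }

lemma MLIdeal.lstar_congr (I : MLIdeal G) {a a' b b' : G}
    (ha : a⁻¹ * a' ∈ I.toSubgroup) (hb : b⁻¹ * b' ∈ I.toSubgroup) :
    (a ⋆ b)⁻¹ * (a' ⋆ b') ∈ I.toSubgroup := by
  obtain ⟨i, hi, rfl⟩ : ∃ i ∈ I.toSubgroup, a' = a * i :=
    ⟨a⁻¹ * a', ha, by group⟩
  obtain ⟨j, hj, rfl⟩ : ∃ j ∈ I.toSubgroup, b' = b * j :=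
    ⟨b⁻¹ * b', hb, by group⟩
  have h1 : (a * i) ⋆ (b * j) = (a * (i ⋆ (b * j)) * a⁻¹) * (a ⋆ (b * j)) :=
    lstar_mul_left a i (b * j)
  have h2 : a ⋆ (b * j) = (a ⋆ b) * (b * (a ⋆ j) * b⁻¹) := lstar_mul_right a b j
  rw [h1, h2]
  have hu : a * (i ⋆ (b * j)) * a⁻¹ ∈ I.toSubgroup :=
    I.conj_mem' _ (I.lstar_mem_right' _ hi) a
  have hv : b * (a ⋆ j) * b⁻¹ ∈ I.toSubgroup :=
    I.conj_mem' _ (I.lstar_mem_left' _ hj) b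
  have : (a ⋆ b)⁻¹ * (a * (i ⋆ (b * j)) * a⁻¹ * ((a ⋆ b) * (b * (a ⋆ j) * b⁻¹))) =
      ((a ⋆ b)⁻¹ * (a * (i ⋆ (b * j)) * a⁻¹) * (a ⋆ b)) * (b * (a ⋆ j) * b⁻¹) := by
    group
  rw [this]
  exact mul_mem (Subgroup.Normal.conj_mem' I.normal _ hu _) hv

/-- The quotient of a multiplicative Lie algebra by an ideal. -/
instance instQuotient (I : MLIdeal G) : MultLieAlgebra (G ⧸ I.toSubgroup) where
  lstar := Quotient.map₂ (· ⋆ ·) (by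
    intro a a' ha b b' hb
    have ha' : a⁻¹ * a' ∈ I.toSubgroup := QuotientGroup.leftRel_apply.mp ha
    have hb' : b⁻¹ * b' ∈ I.toSubgroup := QuotientGroup.leftRel_apply.mp hb
    exact QuotientGroup.leftRel_apply.mpr (I.lstar_congr ha' hb'))
  lstar_self x := Quotient.inductionOn x fun a => congrArg QuotientGroup.mk (lstar_self a)
  lstar_mul_right x y z := Quotient.inductionOn₃ x y z fun a b c =>
    congrArg QuotientGroup.mk (lstar_mul_right a b c)
  lstar_mul_left x y z := Quotient.inductionOn₃ x y z fun a b c =>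
    congrArg QuotientGroup.mk (lstar_mul_left a b c)
  lstar_jacobi x y z := Quotient.inductionOn₃ x y z fun a b c =>
    congrArg QuotientGroup.mk (lstar_jacobi a b c)
  conj_lstar x y z := Quotient.inductionOn₃ x y z fun a b c =>
    congrArg QuotientGroup.mk (conj_lstar a b c)

lemma quot_lstar (I : MLIdeal G) (a b : G) :
    (QuotientGroup.mk (a ⋆ b) : G ⧸ I.toSubgroup) = QuotientGroup.mk a ⋆ QuotientGroup.mk b :=
  rfl

/-- The ideal `I ∩ ᴹ[G,G]`. -/
def MLIdeal.infCommutator (I : MLIdeal G) : MLIdeal G where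
  carrier := {x : G | x ∈ I.toSubgroup ∧ x ∈ mlCommutator G}
  one_mem' := ⟨one_mem _, one_mem _⟩
  mul_mem' := fun ha hb => ⟨mul_mem ha.1 hb.1, mul_mem ha.2 hb.2⟩
  inv_mem' := fun ha => ⟨inv_mem ha.1, inv_mem ha.2⟩
  conj_mem' := fun n hn g =>
    ⟨I.conj_mem' n hn.1 g, Subgroup.Normal.conj_mem mlCommutator_normal n hn.2 g⟩
  lstar_mem_left' := by
    intro g i hi
    exact ⟨I.lstar_mem_left' g hi.1, lstar_mem_mlCommutator _ _⟩
  lstar_mem_right' := by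
    intro g i hi
    exact ⟨I.lstar_mem_right' g hi.1, lstar_mem_mlCommutator _ _⟩

/-- A multiplicative Lie algebra isomorphism is a group isomorphism preserving `⋆`. -/
def IsMLAEquiv {G : Type u} {H : Type v} [MultLieAlgebra G] [MultLieAlgebra H]
    (e : G ≃* H) : Prop :=
  ∀ a b : G, e (a ⋆ b) = e a ⋆ e b

/-- A witness that `G` and `H` arise as quotients of a common multiplicative Lie
algebra `K` by ideals `ZG`, `ZH`, with `G ∼ K ∼ H` (Theorem on common ancestors). -/
structure CommonQuotientWitness (G : Type u) (H : Type u)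
    [MultLieAlgebra G] [MultLieAlgebra H] where
  K : Type u
  [instK : MultLieAlgebra K]
  ZG : MLIdeal K
  ZH : MLIdeal K
  isoG : G ≃* (K ⧸ ZH.toSubgroup)
  isoG_lstar : IsMLAEquiv isoG
  isoH : H ≃* (K ⧸ ZG.toSubgroup)
  isoH_lstar : IsMLAEquiv isoH
  isoclinicGK : Isoclinic G K
  isoclinicKH : Isoclinic K H

/-- A witness that `G` and `H` embed as ideals of a common multiplicative Lie algebra
`K̃`, each isoclinic to `K̃` (common isoclinic descendant). -/
structure CommonIdealWitness (G : Type u) (H : Type u)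
    [MultLieAlgebra G] [MultLieAlgebra H] where
  K : Type u
  [instK : MultLieAlgebra K]
  KG : MLIdeal K
  KH : MLIdeal K
  isoG : G ≃* KG.toMLSubalgebra.toSubgroup
  isoG_lstar : IsMLAEquiv isoG
  isoH : H ≃* KH.toMLSubalgebra.toSubgroup
  isoH_lstar : IsMLAEquiv isoH
  isoclinicG : Isoclinic (KG.toMLSubalgebra.toSubgroup) K
  isoclinicH : Isoclinic (KH.toMLSubalgebra.toSubgroup) K

/-- A witness of a stem multiplicative Lie algebra isoclinic to `G`. -/
structure StemWitness (G : Type u) [MultLieAlgebra G] where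
  H : Type u
  [instH : MultLieAlgebra H]
  stem : mlCenter H ≤ mlCommutator H
  isoclinic : Isoclinic G H

/-! Commutators and `⋆`-products only depend on classes modulo the multiplicative Lie center.
Hence, when `(Im α)·𝒵(H) = H`, `α` maps the generators of `ᴹ[G,G]` onto those of `ᴹ[H,H]` and
`𝒵(G)` into `𝒵(H)`; conversely, if `α g` is central then all commutators and `⋆`-products
involving `g` lie in `ker α ∩ ᴹ[G,G] = 1`, so `g` is central. Thus `α` induces isomorphisms
`G/𝒵(G) ≅ H/𝒵(H)` and `ᴹ[G,G] ≅ ᴹ[H,H]`, and these form an isoclinism. -/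

theorem _root_.commutatorElement_mul_left_of_commute {M : Type*} [Group M] {a b z : M}
    (h : Commute z b) : ⁅a * z, b⁆ = ⁅a, b⁆ := by
  rw [commutatorElement_mul_left_eq_conj_mul, commutatorElement_eq_one_iff_commute.mpr h,
    mul_one, mul_inv_cancel, one_mul]

theorem _root_.commutatorElement_mul_right_of_commute {M : Type*} [Group M] {a b z : M}
    (h : Commute a z) : ⁅a, b * z⁆ = ⁅a, b⁆ := by
  rw [commutatorElement_mul_right_eq_mul_conj, commutatorElement_eq_one_iff_commute.mpr h,
    mul_one, mul_inv_cancel_right]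

theorem _root_.QuotientGroup.exists_mem_eq_mul_of_mk_eq {M : Type*} [Group M] {N : Subgroup M}
    {a a' : M} (h : (a : M ⧸ N) = a') : ∃ z ∈ N, a' = a * z :=
  ⟨a⁻¹ * a', QuotientGroup.eq.mp h, (mul_inv_cancel_left a a').symm⟩

theorem _root_.QuotientGroup.mk'_comp_surjective_iff {M N : Type*} [Group M] [Group N]
    {f : M →* N} {K : Subgroup N} [K.Normal] :
    Function.Surjective ((QuotientGroup.mk' K).comp f) ↔ f.range ⊔ K = ⊤ := by
  rw [← MonoidHom.range_eq_top, MonoidHom.range_comp,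
    ← (Subgroup.comap_injective (QuotientGroup.mk'_surjective K)).eq_iff,
    QuotientGroup.comap_map_mk', Subgroup.comap_top, sup_comm]

theorem _root_.MonoidHom.domRestrict_injective_iff {M N : Type*} [Group M] [Group N]
    {f : M →* N} {K : Subgroup M} :
    Function.Injective (f.domRestrict K) ↔ f.ker ⊓ K = ⊥ := by
  rw [← MonoidHom.ker_eq_bot_iff, MonoidHom.ker_domRestrict, Subgroup.subgroupOf_eq_bot,
    disjoint_iff]

theorem commute_of_mem_mlCenter {z : G} (hz : z ∈ mlCenter G) (x : G) : Commute z x :=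
  hz.1 x

theorem mem_mlCenter_iff_commutatorElement {g : G} :
    g ∈ mlCenter G ↔ ∀ x : G, ⁅g, x⁆ = 1 ∧ g ⋆ x = 1 ∧ x ⋆ g = 1 := by
  simp only [mem_mlCenter_iff, commutatorElement_eq_one_iff_mul_comm, forall_and]

theorem commutatorElement_eq_of_mk_eq {a a' b b' : G} (ha : (a : G ⧸ mlCenter G) = a')
    (hb : (b : G ⧸ mlCenter G) = b') : ⁅a, b⁆ = ⁅a', b'⁆ := by
  obtain ⟨z, hz, rfl⟩ := QuotientGroup.exists_mem_eq_mul_of_mk_eq ha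
  obtain ⟨w, hw, rfl⟩ := QuotientGroup.exists_mem_eq_mul_of_mk_eq hb
  rw [commutatorElement_mul_right_of_commute (commute_of_mem_mlCenter hw _).symm,
    commutatorElement_mul_left_of_commute (commute_of_mem_mlCenter hz b)]

theorem lstar_eq_of_mk_eq {a a' b b' : G} (ha : (a : G ⧸ mlCenter G) = a')
    (hb : (b : G ⧸ mlCenter G) = b') : a ⋆ b = a' ⋆ b' := by
  obtain ⟨z, hz, rfl⟩ := QuotientGroup.exists_mem_eq_mul_of_mk_eq ha
  obtain ⟨w, hw, rfl⟩ := QuotientGroup.exists_mem_eq_mul_of_mk_eq hb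
  rw [mul_center_lstar hz, lstar_mul_center hw]

section Hom

variable {H : Type v} [MultLieAlgebra H] {α : G →* H}

theorem map_mem_mlCenter (hα : ∀ a b : G, α (a ⋆ b) = α a ⋆ α b)
    (hsurj : Function.Surjective ((QuotientGroup.mk' (mlCenter H)).comp α)) {z : G}
    (hz : z ∈ mlCenter G) : α z ∈ mlCenter H := by
  refine mem_mlCenter_iff_commutatorElement.mpr fun x => ?_
  obtain ⟨g, hg⟩ := hsurj x
  obtain ⟨hcomm, hleft, hright⟩ := mem_mlCenter_iff_commutatorElement.mp hz g
  refine ⟨?_, ?_, ?_⟩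
  · rw [← commutatorElement_eq_of_mk_eq rfl hg, ← map_commutatorElement, hcomm, map_one]
  · rw [← lstar_eq_of_mk_eq rfl hg, ← hα, hleft, map_one]
  · rw [← lstar_eq_of_mk_eq hg rfl, ← hα, hright, map_one]

theorem mem_mlCenter_of_map_mem (hα : ∀ a b : G, α (a ⋆ b) = α a ⋆ α b)
    (hker : α.ker ⊓ mlCommutator G = ⊥) {g : G} (hg : α g ∈ mlCenter H) : g ∈ mlCenter G := by
  have eq_one {x : G} (hx : x ∈ mlCommutator G) (h : α x = 1) : x = 1 :=
    Subgroup.mem_bot.mp (hker ▸ Subgroup.mem_inf.mpr ⟨h, hx⟩)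
  refine mem_mlCenter_iff_commutatorElement.mpr fun x => ?_
  obtain ⟨hcomm, hleft, hright⟩ := mem_mlCenter_iff_commutatorElement.mp hg (α x)
  exact ⟨eq_one (commutator_mem_mlCommutator g x) (by rw [map_commutatorElement, hcomm]),
    eq_one (lstar_mem_mlCommutator g x) (by rw [hα, hleft]),
    eq_one (lstar_mem_mlCommutator x g) (by rw [hα, hright])⟩

theorem comap_mlCenter (hα : ∀ a b : G, α (a ⋆ b) = α a ⋆ α b)
    (hker : α.ker ⊓ mlCommutator G = ⊥)
    (hsurj : Function.Surjective ((QuotientGroup.mk' (mlCenter H)).comp α)) :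
    (mlCenter H).comap α = mlCenter G :=
  le_antisymm (fun _ hg => mem_mlCenter_of_map_mem hα hker hg)
    (fun _ hz => map_mem_mlCenter hα hsurj hz)

theorem map_mlCommutator (hα : ∀ a b : G, α (a ⋆ b) = α a ⋆ α b)
    (hsurj : Function.Surjective ((QuotientGroup.mk' (mlCenter H)).comp α)) :
    (mlCommutator G).map α = mlCommutator H := by
  rw [mlCommutator, mlCommutator, MonoidHom.map_closure]
  congr 1
  ext y
  constructor
  · rintro ⟨x, ⟨a, b, rfl⟩ | ⟨a, b, rfl⟩, rfl⟩
    exacts [Or.inl ⟨α a, α b, map_commutatorElement α a b⟩, Or.inr ⟨α a, α b, hα a b⟩]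
  · rintro (⟨a, b, rfl⟩ | ⟨a, b, rfl⟩) <;> obtain ⟨g, hg⟩ := hsurj a <;>
      obtain ⟨g', hg'⟩ := hsurj b
    · exact ⟨⁅g, g'⁆, Or.inl ⟨g, g', rfl⟩,
        (map_commutatorElement α g g').trans (commutatorElement_eq_of_mk_eq hg hg')⟩
    · exact ⟨g ⋆ g', Or.inr ⟨g, g', rfl⟩, (hα g g').trans (lstar_eq_of_mk_eq hg hg')⟩

variable (α) in
noncomputable def Isoclinism.ofHom (hα : ∀ a b : G, α (a ⋆ b) = α a ⋆ α b)
    (hker : α.ker ⊓ mlCommutator G = ⊥)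
    (hsurj : Function.Surjective ((QuotientGroup.mk' (mlCenter H)).comp α)) :
    Isoclinism G H where
  lam := (QuotientGroup.quotientMulEquivOfEq <| by
      rw [← MonoidHom.comap_ker, QuotientGroup.ker_mk', comap_mlCenter hα hker hsurj]).trans
    (QuotientGroup.quotientKerEquivOfSurjective _ hsurj)
  mu := (MonoidHom.ofInjective (MonoidHom.domRestrict_injective_iff.mpr hker)).trans
    (MulEquiv.subgroupCongr ((α.domRestrict_range _).trans (map_mlCommutator hα hsurj)))
  map_commutator g g' _ _ hg hg' :=
    (map_commutatorElement α g g').trans (commutatorElement_eq_of_mk_eq hg hg')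
  map_lstar g g' _ _ hg hg' := (hα g g').trans (lstar_eq_of_mk_eq hg hg')

theorem Isoclinism.ker_inf_mlCommutator_eq_bot (ic : Isoclinism G H)
    (hmu : ∀ x : mlCommutator G, (ic.mu x : H) = α x) : α.ker ⊓ mlCommutator G = ⊥ :=
  MonoidHom.domRestrict_injective_iff.mp fun x y hxy =>
    ic.mu.injective <| Subtype.ext <| by rw [hmu, hmu]; exact hxy

theorem Isoclinism.range_sup_mlCenter_eq_top (ic : Isoclinism G H)
    (hlam : ∀ g : G, ic.lam (QuotientGroup.mk g) = QuotientGroup.mk (α g)) :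
    α.range ⊔ mlCenter H = ⊤ := by
  have hcomp : ⇑((QuotientGroup.mk' (mlCenter H)).comp α) = ic.lam ∘ QuotientGroup.mk :=
    funext fun g => (hlam g).symm
  exact QuotientGroup.mk'_comp_surjective_iff.mp
    (hcomp ▸ ic.lam.surjective.comp QuotientGroup.mk_surjective)

end Hom

theorem hom_induces_isoclinism_iff_general {G : Type u} {H : Type v}
    [MultLieAlgebra G] [MultLieAlgebra H]
    (α : G →* H) (hα : ∀ a b : G, α (a ⋆ b) = α a ⋆ α b) :
    (∃ ic : Isoclinism G H,
        (∀ g : G, ic.lam (QuotientGroup.mk g) = QuotientGroup.mk (α g)) ∧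
          ∀ x : mlCommutator G, (ic.mu x : H) = α x) ↔
      α.ker ⊓ mlCommutator G = ⊥ ∧ α.range ⊔ mlCenter H = ⊤ := by
  constructor
  · rintro ⟨ic, hlam, hmu⟩
    exact ⟨ic.ker_inf_mlCommutator_eq_bot hmu, ic.range_sup_mlCenter_eq_top hlam⟩
  · rintro ⟨hker, hsup⟩
    exact ⟨.ofHom α hα hker (QuotientGroup.mk'_comp_surjective_iff.mpr hsup),
      fun _ => rfl, fun _ => rfl⟩

/-- For finite multiplicative Lie algebras and a homomorphism
`α : G → H`, `α` induces an isoclinism between `G` and `H` iff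
`ker α ∩ ᴹ[G,G] = 1` and `H = (Im α)·𝒵(H)`. -/
theorem hom_induces_isoclinism_iff {G : Type u} {H : Type v}
    [MultLieAlgebra G] [MultLieAlgebra H] [Finite G] [Finite H]
    (α : G →* H) (hα : ∀ a b : G, α (a ⋆ b) = α a ⋆ α b) :
    (∃ ic : Isoclinism G H,
        (∀ g : G, ic.lam (QuotientGroup.mk g) = QuotientGroup.mk (α g)) ∧
          ∀ x : mlCommutator G, (ic.mu x : H) = α x) ↔
      α.ker ⊓ mlCommutator G = ⊥ ∧ α.range ⊔ mlCenter H = ⊤ :=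
  hom_induces_isoclinism_iff_general α hα

end MultLieAlgebra
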